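/- Let G be a finitely generated group and let K be a normal subgroup of a free group F_n with surjection F_n ↠ G having kernel K. Then there exists a finite subset {r₁,…,r_k} ⊆ K such that a homomorphism ρ : F_n → SL(2,ℂ) factors through G if and only if ρ(rⱼ) = I₂ for all j ≤ k. -/

import Mathlib

/-!
A representation `ρ : F_ι → SL(m, k)` is a `k`-point of `SL(m, k)^ι`, i.e. a ring map out of its
coordinate ring `A`, and `ρ w = 1` says exactly that this map kills the ideal of `A` generated by
the entries of `Φ w - 1`, where `Φ` is the universal representation over `A`.
Since `A` is Noetherian, the sum of these ideals over `w ∈ K` is already the sum over a finite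
subset of `K`, and those finitely many relations cut out the representations killing `K`.
-/

open MvPolynomial Matrix

theorem WellFoundedGT.exists_finset_biSup_eq {α ι : Type*} [CompleteLattice α] [WellFoundedGT α]
    (f : ι → α) (S : Set ι) : ∃ s : Finset ι, ↑s ⊆ S ∧ ⨆ i ∈ s, f i = ⨆ i ∈ S, f i := by
  have hcompact : IsCompactElement (⨆ i ∈ S, f i) :=
    (CompleteLattice.isSupFiniteCompact_iff_all_elements_compact α).mp
      (CompleteLattice.WellFoundedGT.isSupFiniteCompact α) _
  obtain ⟨t, ht⟩ := CompleteLattice.IsCompactElement.exists_finset_of_le_iSup _ hcompact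
    (fun i : S => f i) (iSup_subtype'' S f).ge
  have hsub : ↑(t.map (Function.Embedding.subtype _)) ⊆ S := by simp
  refine ⟨t.map (Function.Embedding.subtype _), hsub, le_antisymm ?_ ?_⟩
  · exact biSup_mono fun i hi => hsub hi
  · refine ht.trans (iSup₂_le fun i hi => ?_)
    exact le_biSup f (Finset.mem_map_of_mem _ hi)

theorem MonoidHom.exists_comp_eq_iff_ker_le {G H K : Type*} [Group G] [Group H] [Group K]
    {π : G →* H} (hπ : Function.Surjective π) (ρ : G →* K) :
    (∃ ρ' : H →* K, ρ'.comp π = ρ) ↔ π.ker ≤ ρ.ker := by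
  refine ⟨?_, fun h => ⟨π.liftOfSurjective hπ ⟨ρ, h⟩, π.liftOfRightInverse_comp _ _ _⟩⟩
  rintro ⟨ρ', rfl⟩ g hg
  simp_all

theorem Matrix.SpecialLinearGroup.span_entries_sub_one_le_ker_iff {m A B : Type*} [Fintype m]
    [DecidableEq m] [CommRing A] [CommRing B] (φ : A →+* B) (g : SpecialLinearGroup m A) :
    Ideal.span (Set.range fun p : m × m => ((g : Matrix m m A) - 1) p.1 p.2) ≤ RingHom.ker φ ↔
      SpecialLinearGroup.map φ g = 1 := by
  simp only [Ideal.span_le, Set.range_subset_iff, SetLike.mem_coe, RingHom.mem_ker,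
    Prod.forall, SpecialLinearGroup.ext_iff, SpecialLinearGroup.map_apply_coe]
  simp [sub_eq_zero, Matrix.one_apply, apply_ite φ]

noncomputable section

namespace SLRepresentation

variable (ι m k : Type*) [Fintype m] [DecidableEq m] [CommRing k]

def genericMatrix (i : ι) : Matrix m m (MvPolynomial (ι × m × m) k) :=
  Matrix.of fun a b => X (i, a, b)

/-- The coordinate ring of the representation variety `Hom(F_ι, SL(m, k)) = SL(m, k)^ι`. -/
abbrev CoordRing : Type _ :=
  MvPolynomial (ι × m × m) k ⧸ Ideal.span (Set.range fun i => (genericMatrix ι m k i).det - 1)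

def genericSL (i : ι) : SpecialLinearGroup m (CoordRing ι m k) :=
  ⟨(genericMatrix ι m k i).map (Ideal.Quotient.mk _), by
    rw [← RingHom.mapMatrix_apply, ← RingHom.map_det, ← map_one (Ideal.Quotient.mk _),
      Ideal.Quotient.mk_eq_mk_iff_sub_mem]
    exact Ideal.subset_span ⟨i, rfl⟩⟩

def universalRep : FreeGroup ι →* SpecialLinearGroup m (CoordRing ι m k) :=
  FreeGroup.lift (genericSL ι m k)

variable {ι m k}

theorem span_det_genericMatrix_sub_one_le_ker_eval (ρ : FreeGroup ι →* SpecialLinearGroup m k) :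
    Ideal.span (Set.range fun i => (genericMatrix ι m k i).det - 1) ≤
      RingHom.ker (eval fun x : ι × m × m => ρ (FreeGroup.of x.1) x.2.1 x.2.2) := by
  rw [Ideal.span_le]
  rintro _ ⟨i, rfl⟩
  have hgen : (eval fun x : ι × m × m => ρ (FreeGroup.of x.1) x.2.1 x.2.2).mapMatrix
      (genericMatrix ι m k i) = ρ (FreeGroup.of i) := by
    ext a b
    simp [genericMatrix]
  simp [RingHom.map_det, hgen]

def evalRep (ρ : FreeGroup ι →* SpecialLinearGroup m k) : CoordRing ι m k →+* k :=
  Ideal.Quotient.lift _ _ fun _ ha => span_det_genericMatrix_sub_one_le_ker_eval ρ ha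

theorem map_evalRep_comp_universalRep (ρ : FreeGroup ι →* SpecialLinearGroup m k) :
    (SpecialLinearGroup.map (evalRep ρ)).comp (universalRep ι m k) = ρ := by
  refine FreeGroup.ext_hom _ _ fun i => ?_
  rw [MonoidHom.comp_apply, universalRep, FreeGroup.lift_apply_of]
  ext a b
  exact eval_X ..

def wordIdeal (w : FreeGroup ι) : Ideal (CoordRing ι m k) :=
  Ideal.span (Set.range fun p : m × m =>
    ((universalRep ι m k w : Matrix m m (CoordRing ι m k)) - 1) p.1 p.2)

theorem wordIdeal_le_ker_evalRep_iff (ρ : FreeGroup ι →* SpecialLinearGroup m k)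
    (w : FreeGroup ι) : wordIdeal w ≤ RingHom.ker (evalRep ρ) ↔ ρ w = 1 := by
  rw [wordIdeal, SpecialLinearGroup.span_entries_sub_one_le_ker_iff, ← MonoidHom.comp_apply,
    map_evalRep_comp_universalRep]

theorem exists_finset_forall_map_eq_one_iff (ι m k : Type*) [Finite ι] [Fintype m]
    [DecidableEq m] [CommRing k] [IsNoetherianRing k] (S : Set (FreeGroup ι)) :
    ∃ s : Finset (FreeGroup ι), ↑s ⊆ S ∧ ∀ ρ : FreeGroup ι →* SpecialLinearGroup m k,
      (∀ r ∈ s, ρ r = 1) ↔ ∀ r ∈ S, ρ r = 1 := by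
  obtain ⟨s, hsS, hs⟩ := WellFoundedGT.exists_finset_biSup_eq (wordIdeal (m := m) (k := k)) S
  refine ⟨s, hsS, fun ρ => ?_⟩
  simp only [← wordIdeal_le_ker_evalRep_iff ρ, ← iSup₂_le_iff, hs]

end SLRepresentation

end

/-- Equational Noetherianity of `SL(2,ℂ)`: if `G` is the quotient of a free group
`F_n` by the normal subgroup `K = ker π`, then there are finitely many elements
`r₁, …, r_k ∈ K` such that a representation `ρ : F_n → SL(2,ℂ)` factors through `G`
iff `ρ(rⱼ) = I` for all `j`. -/
theorem stmt_15 {G : Type*} [Group G] (n : ℕ)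
    (π : FreeGroup (Fin n) →* G) (hπ : Function.Surjective π) :
    ∃ s : Finset (FreeGroup (Fin n)), (↑s : Set (FreeGroup (Fin n))) ⊆ (π.ker : Set (FreeGroup (Fin n))) ∧
      ∀ ρ : FreeGroup (Fin n) →* Matrix.SpecialLinearGroup (Fin 2) ℂ,
        (∃ ρ' : G →* Matrix.SpecialLinearGroup (Fin 2) ℂ, ρ'.comp π = ρ) ↔
          ∀ r ∈ s, ρ r = 1 := by
  obtain ⟨s, hs, hsρ⟩ :=
    SLRepresentation.exists_finset_forall_map_eq_one_iff (Fin n) (Fin 2) ℂ π.ker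
  exact ⟨s, hs, fun ρ => (MonoidHom.exists_comp_eq_iff_ker_le hπ ρ).trans (hsρ ρ).symm⟩
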